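/- Let X and Y be real random variables on a probability space such that the cumulative distribution functions of X and of X + Y are both continuous and strictly increasing on ℝ. Let α ∈ (0,1), ε ∈ (0, min{α, 1 − α}), and δ > 0 be such that P(|Y| > δ) < ε. Then VaR^{α−ε}(X) − δ ≤ VaR^α(X + Y) ≤ VaR^{α+ε}(X) + δ, where VaR^β(Z) := inf{t ∈ ℝ : P(Z ≤ t) ≥ β} for a real random variable Z and β ∈ (0,1). -/

import Mathlib

open MeasureTheory

/-- The value-at-risk at level `β` of a real random variable `Z` on `(Ω, 𝓕, P)`:
`VaR^β(Z) = inf {t : ℝ | P(Z ≤ t) ≥ β}`. -/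
noncomputable def VaR {Ω : Type*} [MeasurableSpace Ω]
    (β : ℝ) (P : Measure Ω) (Z : Ω → ℝ) : ℝ :=
  sInf {t : ℝ | β ≤ (P {ω | Z ω ≤ t}).toReal}

/-!
If `|Y| ≤ δ` off an event of probability `p`, then `{X + Y ≤ t} ⊆ {X ≤ t + δ} ∪ {|Y| > δ}` and
`{X ≤ t} ⊆ {X + Y ≤ t + δ} ∪ {|Y| > δ}`, so each CDF is bounded by the other, shifted by `δ`,
plus `p < ε`. Since a continuous CDF attains its level at the value-at-risk, such a CDF
comparison transfers to the value-at-risk at levels differing by `ε`.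
-/

open Filter Set ProbabilityTheory

section VaR

variable {Ω : Type*} [MeasurableSpace Ω] {P : Measure Ω} {W Z : Ω → ℝ} {β : ℝ}

lemma measure_le_le_add_measure_of_le_add_off [IsFiniteMeasure P] {S : Set Ω} {δ : ℝ}
    (hS : ∀ ω ∉ S, Z ω ≤ W ω + δ) (t : ℝ) :
    (P {ω | W ω ≤ t}).toReal ≤ (P {ω | Z ω ≤ t + δ}).toReal + (P S).toReal := by
  simp only [← measureReal_def]
  refine (measureReal_mono fun ω hω => ?_).trans (measureReal_union_le _ _)
  by_cases hωS : ω ∈ S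
  · exact Or.inr hωS
  · exact Or.inl (show Z ω ≤ t + δ by linarith [hS ω hωS, show W ω ≤ t from hω])

variable [IsProbabilityMeasure P]

lemma cdf_map_eq_measure_le (hZ : Measurable Z) (t : ℝ) :
    cdf (P.map Z) t = (P {ω | Z ω ≤ t}).toReal := by
  have := Measure.isProbabilityMeasure_map (μ := P) hZ.aemeasurable
  rw [cdf_eq_real, measureReal_def, Measure.map_apply hZ measurableSet_Iic]
  rfl

lemma nonempty_VaR_set (hZ : Measurable Z) (hβ : β < 1) :
    {t : ℝ | β ≤ (P {ω | Z ω ≤ t}).toReal}.Nonempty := by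
  obtain ⟨t, ht⟩ := ((tendsto_cdf_atTop (P.map Z)).eventually (eventually_ge_nhds hβ)).exists
  exact ⟨t, ht.trans_eq (cdf_map_eq_measure_le hZ t)⟩

lemma bddBelow_VaR_set (hZ : Measurable Z) (hβ : 0 < β) :
    BddBelow {t : ℝ | β ≤ (P {ω | Z ω ≤ t}).toReal} := by
  obtain ⟨s, hs⟩ := ((tendsto_cdf_atBot (P.map Z)).eventually (eventually_lt_nhds hβ)).exists
  refine ⟨s, fun t ht => le_of_not_gt fun hts => ?_⟩
  rw [mem_ofPred_eq, ← cdf_map_eq_measure_le hZ] at ht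
  exact (ht.trans (monotone_cdf _ hts.le)).not_gt hs

lemma le_measure_le_VaR (hZ : Measurable Z)
    (hcont : Continuous fun t => (P {ω | Z ω ≤ t}).toReal) (hβ : β ∈ Ioo 0 1) :
    β ≤ (P {ω | Z ω ≤ VaR β P Z}).toReal :=
  (isClosed_le continuous_const hcont).csInf_mem (nonempty_VaR_set hZ hβ.2)
    (bddBelow_VaR_set hZ hβ.1)

lemma VaR_le_of_le_measure_le (hZ : Measurable Z) (hβ : 0 < β) {t : ℝ}
    (ht : β ≤ (P {ω | Z ω ≤ t}).toReal) : VaR β P Z ≤ t :=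
  csInf_le (bddBelow_VaR_set hZ hβ) ht

lemma VaR_le_VaR_add_of_measure_le_le_add {γ η δ : ℝ} (hW : Measurable W) (hZ : Measurable Z)
    (hWcont : Continuous fun t => (P {ω | W ω ≤ t}).toReal) (hβ : β ∈ Ioo 0 1) (hγ : 0 < γ)
    (hγβ : γ + η ≤ β)
    (hcmp : ∀ t, (P {ω | W ω ≤ t}).toReal ≤ (P {ω | Z ω ≤ t + δ}).toReal + η) :
    VaR γ P Z ≤ VaR β P W + δ :=
  VaR_le_of_le_measure_le hZ hγ <| by
    linarith [le_measure_le_VaR hW hWcont hβ, hcmp (VaR β P W)]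

end VaR

theorem VaR_add_perturbation_bounds_general
    {Ω : Type*} [MeasurableSpace Ω]
    (P : Measure Ω) [IsProbabilityMeasure P]
    (X Y : Ω → ℝ) (hX : Measurable X) (hY : Measurable Y)
    (hXcdf_cont : Continuous fun t => (P {ω | X ω ≤ t}).toReal)
    (hXYcdf_cont : Continuous fun t => (P {ω | X ω + Y ω ≤ t}).toReal)
    (α ε δ : ℝ) (hα : α ∈ Set.Ioo (0 : ℝ) 1)
    (hε : ε ∈ Set.Ioo (0 : ℝ) (min α (1 - α)))
    (hYδ : (P {ω | δ < |Y ω|}).toReal < ε) :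
    VaR (α - ε) P X - δ ≤ VaR α P (fun ω => X ω + Y ω) ∧
      VaR α P (fun ω => X ω + Y ω) ≤ VaR (α + ε) P X + δ := by
  obtain ⟨hα0, hα1⟩ := hα
  obtain ⟨hε0, hεm⟩ := hε
  have hεα : ε < α := hεm.trans_le (min_le_left _ _)
  have hεα' : ε < 1 - α := hεm.trans_le (min_le_right _ _)
  have hXY : Measurable fun ω => X ω + Y ω := hX.add hY
  have hYsmall : ∀ ω ∉ {ω | δ < |Y ω|}, |Y ω| ≤ δ := fun ω hω => not_lt.mp hω
  have hXY_le : ∀ t, (P {ω | X ω + Y ω ≤ t}).toReal ≤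
      (P {ω | X ω ≤ t + δ}).toReal + (P {ω | δ < |Y ω|}).toReal :=
    measure_le_le_add_measure_of_le_add_off fun ω hω => by linarith [(abs_le.mp (hYsmall ω hω)).1]
  have hX_le : ∀ t, (P {ω | X ω ≤ t}).toReal ≤
      (P {ω | X ω + Y ω ≤ t + δ}).toReal + (P {ω | δ < |Y ω|}).toReal :=
    measure_le_le_add_measure_of_le_add_off fun ω hω => by linarith [(abs_le.mp (hYsmall ω hω)).2]
  constructor
  · have := VaR_le_VaR_add_of_measure_le_le_add (γ := α - ε) hXY hX hXYcdf_cont ⟨hα0, hα1⟩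
      (by linarith) (by linarith) hXY_le
    linarith
  · exact VaR_le_VaR_add_of_measure_le_le_add hX hXY hXcdf_cont ⟨by linarith, by linarith⟩
      hα0 (by linarith) hX_le

/-- If the CDFs of `X` and `X + Y` are continuous and strictly increasing, `α ∈ (0,1)`,
`ε ∈ (0, min α (1−α))`, `δ > 0` and `P(|Y| > δ) < ε`, then
`VaR^{α−ε}(X) − δ ≤ VaR^α(X+Y) ≤ VaR^{α+ε}(X) + δ`. -/
theorem VaR_add_perturbation_bounds
    {Ω : Type*} [MeasurableSpace Ω]
    (P : Measure Ω) [IsProbabilityMeasure P]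
    (X Y : Ω → ℝ) (hX : Measurable X) (hY : Measurable Y)
    (hXcdf_cont : Continuous fun t => (P {ω | X ω ≤ t}).toReal)
    (hXcdf_mono : StrictMono fun t => (P {ω | X ω ≤ t}).toReal)
    (hXYcdf_cont : Continuous fun t => (P {ω | X ω + Y ω ≤ t}).toReal)
    (hXYcdf_mono : StrictMono fun t => (P {ω | X ω + Y ω ≤ t}).toReal)
    (α ε δ : ℝ) (hα : α ∈ Set.Ioo (0 : ℝ) 1)
    (hε : ε ∈ Set.Ioo (0 : ℝ) (min α (1 - α))) (hδ : 0 < δ)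
    (hYδ : (P {ω | δ < |Y ω|}).toReal < ε) :
    VaR (α - ε) P X - δ ≤ VaR α P (fun ω => X ω + Y ω) ∧
      VaR α P (fun ω => X ω + Y ω) ≤ VaR (α + ε) P X + δ :=
  VaR_add_perturbation_bounds_general P X Y hX hY hXcdf_cont hXYcdf_cont α ε δ hα hε hYδ
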